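/- Let F : ℝ^{N×n} → ℝ be rank-one convex and suppose limsup_{|z|→∞} F(z)/|z|^q < ∞ for some 1 ≤ q < ∞. Then limsup_{|z|→∞} |F(z)|/|z|^q < ∞. -/

import Mathlib

/-!
Rank-one convex functions are convex along each coordinate direction `e_i ⊗ e_j`. For such a
separately convex `F`, the midpoint inequality `2 F x ≤ F (x - t e_i) + F (x + t e_i)` bounds
`F (x + t e_i)` from below by `2 F x` minus the value at the reflected point `x - t e_i`, and the
growth hypothesis bounds that value from above as soon as the reflected point lies outside the
ball of radius `R`. Walking from the fixed point `(T, …, T)` to `z` one coordinate at a time, and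
moving a coordinate where `|z i₀|` is maximal last, keeps every reflected point outside that ball
and inside the ball of radius `3 √d ‖z‖`. Hence `F z ≥ -2^d (C (3 √d ‖z‖)^q + |F (T, …, T)|)`.
-/

noncomputable section

/-- The rank-one matrix `a ⊗ b ∈ ℝ^{N×n}` (with Hilbert–Schmidt structure). -/
def tensorHS {N n : ℕ} (a : EuclideanSpace ℝ (Fin N)) (b : EuclideanSpace ℝ (Fin n)) :
    EuclideanSpace ℝ (Fin N × Fin n) :=
  (WithLp.equiv 2 ((Fin N × Fin n) → ℝ)).symm fun p => a p.1 * b p.2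

def RankOneConvex {N n : ℕ} (F : EuclideanSpace ℝ (Fin N × Fin n) → ℝ) : Prop :=
  ∀ (z : EuclideanSpace ℝ (Fin N × Fin n)) (a : EuclideanSpace ℝ (Fin N))
    (b : EuclideanSpace ℝ (Fin n)),
    ConvexOn ℝ Set.univ fun t : ℝ => F (z + t • tensorHS a b)

open scoped Finset

theorem EuclideanSpace.norm_le_sqrt_card_mul {ι : Type*} [Fintype ι] (x : EuclideanSpace ℝ ι)
    {c : ℝ} (hc : 0 ≤ c) (h : ∀ j, |x j| ≤ c) : ‖x‖ ≤ √(Fintype.card ι) * c := by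
  rw [EuclideanSpace.norm_eq, ← Real.sqrt_sq hc, ← Real.sqrt_mul (Nat.cast_nonneg _)]
  refine Real.sqrt_le_sqrt ?_
  calc ∑ j, ‖x j‖ ^ 2 ≤ ∑ _j : ι, c ^ 2 := by
        gcongr with j
        exact (Real.norm_eq_abs _).trans_le (h j)
    _ = Fintype.card ι * c ^ 2 := by simp

theorem tensorHS_single_one {N n : ℕ} (i : Fin N) (j : Fin n) :
    tensorHS (EuclideanSpace.single i (1 : ℝ)) (EuclideanSpace.single j 1) =
      EuclideanSpace.single (i, j) 1 := by
  ext ⟨k, l⟩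
  simp only [tensorHS, WithLp.equiv_symm_apply, PiLp.toLp_apply, PiLp.single_apply, Prod.mk.injEq]
  by_cases hk : k = i <;> by_cases hl : l = j <;> simp [hk, hl]

namespace EuclideanSpace

variable {𝕜 ι : Type*} [DecidableEq ι]

def piecewise (s : Finset ι) (z p : EuclideanSpace 𝕜 ι) : EuclideanSpace 𝕜 ι :=
  WithLp.toLp 2 (s.piecewise z.ofLp p.ofLp)

variable (z p : EuclideanSpace 𝕜 ι)

@[simp]
theorem piecewise_apply (s : Finset ι) (j : ι) :
    piecewise s z p j = if j ∈ s then z j else p j :=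
  rfl

@[simp]
theorem piecewise_empty : piecewise ∅ z p = p := by
  ext j; simp

@[simp]
theorem piecewise_univ [Fintype ι] : piecewise Finset.univ z p = z := by
  ext j; simp

variable [RCLike 𝕜]

theorem piecewise_insert {s : Finset ι} {i : ι} (hi : i ∉ s) :
    piecewise (insert i s) z p = piecewise s z p + (z i - p i) • single i 1 := by
  ext j
  by_cases hj : j = i
  · subst hj; simp [hi]
  · simp [hj]

theorem piecewise_sub_apply {s : Finset ι} {i : ι} (hi : i ∉ s) (j : ι) :
    (piecewise s z p - (z i - p i) • single i 1 : EuclideanSpace 𝕜 ι) j =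
      if j = i then 2 * p i - z i else piecewise s z p j := by
  by_cases hj : j = i
  · subst hj; simp [hi]; ring
  · simp [hj]

end EuclideanSpace

def SeparatelyConvex {ι : Type*} [DecidableEq ι] (F : EuclideanSpace ℝ ι → ℝ) : Prop :=
  ∀ (z : EuclideanSpace ℝ ι) (i : ι),
    ConvexOn ℝ Set.univ fun t : ℝ => F (z + t • EuclideanSpace.single i 1)

theorem RankOneConvex.separatelyConvex {N n : ℕ} {F : EuclideanSpace ℝ (Fin N × Fin n) → ℝ}
    (hF : RankOneConvex F) : SeparatelyConvex F := fun z i => by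
  simpa only [tensorHS_single_one] using
    hF z (EuclideanSpace.single i.1 1) (EuclideanSpace.single i.2 1)

namespace SeparatelyConvex

open EuclideanSpace

variable {ι : Type*} [DecidableEq ι] {F : EuclideanSpace ℝ ι → ℝ}

theorem two_mul_sub_le (hF : SeparatelyConvex F) (x : EuclideanSpace ℝ ι) (i : ι) (t : ℝ) :
    2 * F x - F (x - t • EuclideanSpace.single i 1) ≤ F (x + t • EuclideanSpace.single i 1) := by
  have h := (hF x i).2 (Set.mem_univ (-t)) (Set.mem_univ t) (by norm_num : (0 : ℝ) ≤ 1 / 2)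
    (by norm_num : (0 : ℝ) ≤ 1 / 2) (by norm_num)
  simp only [smul_eq_mul, neg_smul, ← sub_eq_add_neg] at h
  rw [show 1 / 2 * -t + 1 / 2 * t = (0 : ℝ) by ring, zero_smul, add_zero] at h
  linarith

theorem sub_le_two_mul_sub_of_reflect (hF : SeparatelyConvex F) {s : Finset ι} {i : ι} (hi : i ∉ s)
    {z p : EuclideanSpace ℝ ι} {B : ℝ} (hB : F (piecewise s z p - (z i - p i) • single i 1) ≤ B) :
    B - F (piecewise (insert i s) z p) ≤ 2 * (B - F (piecewise s z p)) := by
  have := hF.two_mul_sub_le (piecewise s z p) i (z i - p i)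
  rw [← piecewise_insert z p hi] at this
  linarith

theorem sub_le_two_pow_card_mul_sub (hF : SeparatelyConvex F) (S : Finset ι)
    {z p : EuclideanSpace ℝ ι} {B : ℝ}
    (hB : ∀ i ∈ S, ∀ s ⊆ S, i ∉ s → F (piecewise s z p - (z i - p i) • single i 1) ≤ B) :
    B - F (piecewise S z p) ≤ 2 ^ #S * (B - F p) := by
  refine Finset.induction_on' S (by simp) fun i s hiS hsS his ih => ?_
  calc B - F (piecewise (insert i s) z p) ≤ 2 * (B - F (piecewise s z p)) :=
        hF.sub_le_two_mul_sub_of_reflect his (hB i hiS s hsS his)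
    _ ≤ 2 * (2 ^ #s * (B - F p)) := by gcongr
    _ = 2 ^ #(insert i s) * (B - F p) := by rw [Finset.card_insert_of_notMem his, pow_succ]; ring

theorem sub_le_two_pow_card_mul_sub_const [Fintype ι] (hF : SeparatelyConvex F)
    {z : EuclideanSpace ℝ ι} {T B : ℝ} (i₀ : ι)
    (hB : ∀ w : EuclideanSpace ℝ ι, (w i₀ = T ∨ w i₀ = 2 * T - z i₀) →
      (∀ j, |w j| ≤ |z j| + 2 * |T|) → F w ≤ B) :
    B - F z ≤ 2 ^ Fintype.card ι * (B - F (WithLp.toLp 2 fun _ => T)) := by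
  set p : EuclideanSpace ℝ ι := WithLp.toLp 2 fun _ => T
  have hp (j : ι) : p j = T := rfl
  have hreflect (s : Finset ι) (i : ι) (hi : i ∉ s)
      (hi₀ : (piecewise s z p - (z i - p i) • single i 1 : EuclideanSpace ℝ ι) i₀ = T ∨
        (piecewise s z p - (z i - p i) • single i 1 : EuclideanSpace ℝ ι) i₀ = 2 * T - z i₀) :
      F (piecewise s z p - (z i - p i) • single i 1) ≤ B := by
    refine hB _ hi₀ fun j => ?_
    rw [piecewise_sub_apply z p hi]
    simp only [piecewise_apply, hp]
    split_ifs with hj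
    · subst hj
      have := abs_sub (2 * T) (z j)
      rw [abs_mul, abs_two] at this
      linarith
    · linarith [abs_nonneg T]
    · linarith [abs_nonneg T, abs_nonneg (z j)]
  -- Coordinate `i₀` is moved last, so before that every reflected point has `i₀`-coordinate `T`.
  set S₀ := Finset.univ.erase i₀
  have hi₀ : i₀ ∉ S₀ := Finset.notMem_erase i₀ _
  have hS₀ : insert i₀ S₀ = Finset.univ := Finset.insert_erase (Finset.mem_univ i₀)
  have hfirst := hF.sub_le_two_pow_card_mul_sub S₀ fun i hi s hs his =>
    hreflect s i his <| .inl <| by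
      rw [piecewise_sub_apply z p his, if_neg (Finset.ne_of_mem_erase hi).symm, piecewise_apply,
        if_neg fun h => hi₀ (hs h), hp]
  have hlast := hF.sub_le_two_mul_sub_of_reflect hi₀ (hreflect S₀ i₀ hi₀ <| .inr <| by
    rw [piecewise_sub_apply z p hi₀, if_pos rfl, hp])
  rw [hS₀, piecewise_univ] at hlast
  calc B - F z ≤ 2 * (B - F (piecewise S₀ z p)) := hlast
    _ ≤ 2 * (2 ^ #S₀ * (B - F p)) := by gcongr
    _ = 2 ^ Fintype.card ι * (B - F p) := by
      rw [← Finset.card_univ, ← hS₀, Finset.card_insert_of_notMem hi₀, pow_succ]; ring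

variable [Fintype ι]

theorem neg_le_of_le_mul_rpow (hF : SeparatelyConvex F) {q C R T : ℝ} (hq : 0 ≤ q) (hC : 0 ≤ C)
    (hCR : ∀ w, R ≤ ‖w‖ → F w ≤ C * ‖w‖ ^ q) (hRT : R ≤ T) (hT : 0 ≤ T)
    {z : EuclideanSpace ℝ ι} (hzR : √(Fintype.card ι) * (R + 2 * T) ≤ ‖z‖) (hzT : T ≤ ‖z‖) :
    -(2 ^ Fintype.card ι * (C * (3 * √(Fintype.card ι) * ‖z‖) ^ q +
      |F (WithLp.toLp 2 fun _ => T)|)) ≤ F z := by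
  rcases isEmpty_or_nonempty ι with hι | hι
  · rw [Subsingleton.elim (WithLp.toLp 2 fun _ => T) z]
    simp only [Fintype.card_eq_zero, CharP.cast_eq_zero, Real.sqrt_zero, mul_zero, zero_mul,
      pow_zero, one_mul]
    have : 0 ≤ C * (0 : ℝ) ^ q := by positivity
    linarith [neg_abs_le (F z)]
  set d := Fintype.card ι
  set B := C * (3 * √d * ‖z‖) ^ q
  obtain ⟨i₀, hi₀⟩ := Finite.exists_max fun j => |z j|
  have hd : 0 < √d := Real.sqrt_pos.mpr (by exact_mod_cast Fintype.card_pos)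
  have hzi₀ : R + 2 * T ≤ |z i₀| :=
    le_of_mul_le_mul_left (hzR.trans (norm_le_sqrt_card_mul z (abs_nonneg _) hi₀)) hd
  have hwalk := hF.sub_le_two_pow_card_mul_sub_const (z := z) (T := T) (B := B) i₀ fun w hw hwz => by
    have hRw : R ≤ ‖w‖ := by
      refine le_trans ?_ ((Real.norm_eq_abs _).symm.trans_le (PiLp.norm_apply_le w i₀))
      rcases hw with hw | hw
      · linarith [le_abs_self (w i₀)]
      · rw [hw, abs_sub_comm]
        linarith [abs_sub_abs_le_abs_sub (z i₀) (2 * T), abs_of_nonneg (by linarith : 0 ≤ 2 * T)]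
    have hwz' : ‖w‖ ≤ 3 * √d * ‖z‖ := by
      refine (norm_le_sqrt_card_mul w (by positivity) fun j => (hwz j).trans ?_).trans_eq
        (by ring : √d * (3 * ‖z‖) = 3 * √d * ‖z‖)
      rw [abs_of_nonneg hT]
      linarith [(Real.norm_eq_abs _).symm.trans_le (PiLp.norm_apply_le z j)]
    calc F w ≤ C * ‖w‖ ^ q := hCR w hRw
      _ ≤ B := mul_le_mul_of_nonneg_left (Real.rpow_le_rpow (norm_nonneg w) hwz' hq) hC
  have hB : 0 ≤ B := by positivity
  have h2d : (1 : ℝ) ≤ 2 ^ d := one_le_pow₀ one_le_two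
  nlinarith [neg_abs_le (F (WithLp.toLp 2 fun _ => T))]

theorem exists_abs_le_mul_rpow (hF : SeparatelyConvex F) {q : ℝ} (hq : 0 ≤ q)
    (h : ∃ C R : ℝ, ∀ z, R ≤ ‖z‖ → F z ≤ C * ‖z‖ ^ q) :
    ∃ C R : ℝ, ∀ z, R ≤ ‖z‖ → |F z| ≤ C * ‖z‖ ^ q := by
  obtain ⟨C, R, hCR⟩ := h
  obtain ⟨C₀, hC₀, hCR₀⟩ : ∃ C₀, 0 ≤ C₀ ∧ ∀ w, R ≤ ‖w‖ → F w ≤ C₀ * ‖w‖ ^ q :=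
    ⟨max C 0, le_max_right C 0, fun w hw => (hCR w hw).trans (by gcongr; exact le_max_left C 0)⟩
  obtain ⟨T, hRT, hT⟩ : ∃ T, R ≤ T ∧ 0 ≤ T := ⟨max R 0, le_max_left R 0, le_max_right R 0⟩
  set K := C₀ * (3 * √(Fintype.card ι)) ^ q
  set A := |F (WithLp.toLp 2 fun _ => T)|
  refine ⟨C₀ + 2 ^ Fintype.card ι * (K + A), max (√(Fintype.card ι) * (R + 2 * T)) (max T 1),
    fun z hz => ?_⟩
  simp only [max_le_iff] at hz
  have hlower := hF.neg_le_of_le_mul_rpow hq hC₀ hCR₀ hRT hT hz.1 hz.2.1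
  rw [Real.mul_rpow (by positivity) (norm_nonneg z), ← mul_assoc] at hlower
  have hupper := hCR₀ z (hRT.trans hz.2.1)
  have hz1 : 1 ≤ ‖z‖ ^ q := Real.one_le_rpow hz.2.2 hq
  have hKA : 0 ≤ 2 ^ Fintype.card ι * (K + A) := by positivity
  rw [abs_le]
  constructor
  · nlinarith [mul_le_mul_of_nonneg_left hz1 (by positivity : (0 : ℝ) ≤ 2 ^ Fintype.card ι * A)]
  · nlinarith

end SeparatelyConvex

/-- If `F` is rank-one convex and `limsup_{|z|→∞} F(z)/|z|^q < ∞`, then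
`limsup_{|z|→∞} |F(z)|/|z|^q < ∞`. -/
theorem rankOneConvex_growth_implication (N n : ℕ) (q : ℝ) (hq : 1 ≤ q)
    (F : EuclideanSpace ℝ (Fin N × Fin n) → ℝ) (hF : RankOneConvex F)
    (h : ∃ C R : ℝ, ∀ z : EuclideanSpace ℝ (Fin N × Fin n),
      R ≤ ‖z‖ → F z ≤ C * ‖z‖ ^ q) :
    ∃ C R : ℝ, ∀ z : EuclideanSpace ℝ (Fin N × Fin n),
      R ≤ ‖z‖ → |F z| ≤ C * ‖z‖ ^ q :=
  hF.separatelyConvex.exists_abs_le_mul_rpow (zero_le_one.trans hq) h
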